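/- arXiv:2406.13911 — 5 statements merged into one kernel-verified Lean document; each statement's English description precedes it below -/
import Mathlib

section
/- Theorem (width-1 prophet inequality, Theorem 3.1 of the paper). For every DAG instance of width 1 (i.e., possessing a focal s,t-path P₀ that visits every node), there exists an online algorithm A such that E[Σ_{e ∈ A} W_e] ≥ (1/2)·E[OPT]. -/
open MeasureTheory ProbabilityTheory

/-- A DAG instance: nodes `0,…,n` listed in topological order (start `s = 0`,
target `t = n`), and a finite set `E` of edges with `src e < dst e ≤ n`. -/
structure DAGInst where
  n : ℕ
  n_pos : 1 ≤ n
  E : Type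
  fintypeE : Fintype E
  src : E → ℕ
  dst : E → ℕ
  src_lt_dst : ∀ e, src e < dst e
  dst_le_n : ∀ e, dst e ≤ n

attribute [instance] DAGInst.fintypeE

/-- Extension of a probability space by an additional independent
uniform-`[0,1]` random variable (the second coordinate). -/
noncomputable def extMeasure {Ω : Type} [MeasurableSpace Ω] (μ : Measure Ω) :
    Measure (Ω × ℝ) :=
  μ.prod (MeasureTheory.volume.restrict (Set.Icc (0 : ℝ) 1))

namespace DAGInst

variable (G : DAGInst)

/-- `p` is an `s,t`-path: it starts at node `0`, ends at node `n`, and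
consecutive edges match. -/
def IsPath (p : List G.E) : Prop :=
  p.head?.map G.src = some 0 ∧ p.getLast?.map G.dst = some G.n ∧
    List.Chain' (fun e f => G.dst e = G.src f) p

/-- The path `p` visits the node `v`. -/
def Visits (p : List G.E) (v : ℕ) : Prop :=
  v = 0 ∨ ∃ e ∈ p, G.dst e = v

instance (p : List G.E) (v : ℕ) : Decidable (G.Visits p v) :=
  inferInstanceAs (Decidable (v = 0 ∨ ∃ e ∈ p, G.dst e = v))

/-- The value of the path `p` under (realized) weights `w`. -/
def pathValue (p : List G.E) (w : G.E → ℝ) : ℝ :=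
  (p.map w).sum

/-- The edge that the path `p` takes out of node `i` (if any). -/
def takeOut (p : List G.E) (i : ℕ) : Option G.E :=
  p.find? fun e => G.src e == i

/-- The value of the prophet: the maximum value of an `s,t`-path. -/
noncomputable def OPTval {Ω : Type} (W : G.E → Ω → ℝ) (ω : Ω) : ℝ :=
  sSup {x | ∃ p, G.IsPath p ∧ x = G.pathValue p fun e => W e ω}

/-- The independence assumption on the weights: the tuples of weights of edges
leaving distinct nodes are mutually independent. -/
def IndepWeights {Ω : Type} [MeasurableSpace Ω] (W : G.E → Ω → ℝ) (μ : Measure Ω) : Prop :=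
  iIndepFun
    (fun (i : ℕ) (ω : Ω) => fun e : {e : G.E // G.src e = i} => W e.1 ω) μ

/-- The information available at node `i`: the σ-algebra generated by the auxiliary
uniform random variable `U = Prod.snd` and the weights of edges leaving nodes `≤ i`. -/
def infoAt {Ω : Type} (W : G.E → Ω → ℝ) (i : ℕ) : MeasurableSpace (Ω × ℝ) :=
  MeasurableSpace.comap (Prod.snd : Ω × ℝ → ℝ) inferInstance ⊔
    ⨆ e : G.E, ⨆ _ : G.src e ≤ i,
      MeasurableSpace.comap (fun ω' : Ω × ℝ => W e ω'.1) inferInstance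

/-- `A` is an online algorithm: a random `s,t`-path on the extended space such that
the edge taken out of each node `i < n` is measurable with respect to the information
available at node `i`. -/
def IsOnlineAlg {Ω : Type} (W : G.E → Ω → ℝ) (A : Ω × ℝ → List G.E) : Prop :=
  (∀ ω', G.IsPath (A ω')) ∧
    ∀ i < G.n, @Measurable (Ω × ℝ) (Option G.E) (G.infoAt W i) ⊤
      fun ω' => G.takeOut (A ω') i

/-- The σ-algebra generated by all the weights. -/
def sigmaW {Ω : Type} (W : G.E → Ω → ℝ) : MeasurableSpace Ω :=
  ⨆ e : G.E, MeasurableSpace.comap (W e) inferInstance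

/-- A path is feasible if, for every label `ℓ`, it uses at most `cap ℓ` edges
carrying the label `ℓ`. -/
def Feasible {L : Type} [DecidableEq L] (lab : G.E → Finset L) (cap : L → ℕ)
    (p : List G.E) : Prop :=
  ∀ ℓ : L, (p.filter fun e => decide (ℓ ∈ lab e)).length ≤ cap ℓ

/-- The value of the prophet in the labeled model: the maximum value of a feasible
`s,t`-path. -/
noncomputable def OPTvalFeas {Ω : Type} {L : Type} [DecidableEq L]
    (lab : G.E → Finset L) (cap : L → ℕ) (W : G.E → Ω → ℝ) (ω : Ω) : ℝ :=
  sSup {x | ∃ p, G.IsPath p ∧ G.Feasible lab cap p ∧ x = G.pathValue p fun e => W e ω}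

/-- Node `v` is reachable from node `u`. -/
def Reaches (u v : ℕ) : Prop :=
  u = v ∨ ∃ q : List G.E, q.head?.map G.src = some u ∧ q.getLast?.map G.dst = some v ∧
    List.Chain' (fun e f => G.dst e = G.src f) q

/-- Source of an edge of the auxiliary graph `G_i` (left: original edge,
right: artificial edge replacing an edge leaving `V(P_i)`). -/
def auxSrc : G.E ⊕ G.E → ℕ
  | Sum.inl e => G.src e
  | Sum.inr e => G.src e

/-- Destination of an edge of the auxiliary graph `G_i`: an artificial edge built from
`e` ends at the smallest node of `V(P_i)` reachable from `dst e`. -/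
noncomputable def auxDst (Pi : List G.E) : G.E ⊕ G.E → ℕ
  | Sum.inl e => G.dst e
  | Sum.inr e => sInf {v | G.Visits Pi v ∧ G.Reaches (G.dst e) v}

/-- Which formal edges are actually present in the auxiliary graph `G_i`. -/
def auxValid (Pi : List G.E) : G.E ⊕ G.E → Prop
  | Sum.inl e => G.Visits Pi (G.src e) ∧ G.Visits Pi (G.dst e)
  | Sum.inr e => G.Visits Pi (G.src e) ∧ ¬ G.Visits Pi (G.dst e)

/-- Weight of an edge of the auxiliary graph: an artificial edge inherits the weight
of the original edge. -/
def auxWeight (w : G.E → ℝ) : G.E ⊕ G.E → ℝ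
  | Sum.inl e => w e
  | Sum.inr e => w e

/-- An `s,t`-path of the auxiliary graph `G_i`. -/
def IsAuxPath (Pi : List G.E) (p : List (G.E ⊕ G.E)) : Prop :=
  (∀ f ∈ p, G.auxValid Pi f) ∧
    p.head?.map G.auxSrc = some 0 ∧
    p.getLast?.map (G.auxDst Pi) = some G.n ∧
    List.Chain' (fun f g => G.auxDst Pi f = G.auxSrc g) p

end DAGInst

/-!
Thresholds are defined backwards along the focal path: `τ_j = E[X_j]`, where
`X_j = max_{e : j → k} (W_e - c_e)⁺` and the cost `c_e = ∑_{j < l < k} τ_l` charges an edge for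
the nodes it skips. For any `s,t`-path, `W_e ≤ c_e + X_{src e}`, and the cost intervals and
sources of its edges are disjoint, so `OPT ≤ ∑_j τ_j + ∑_j X_j`, whose mean is `2 ∑_j τ_j`.
The online algorithm takes at each node the edge maximising `W_e - c_e`. Width one gives an edge
`j → j + 1` of cost zero, so the gain at `j` is exactly `X_j`; since the choice at `j` is
independent of the weights further on, backward induction gives `E[ALG from k] ≥ ∑_{l ≥ k} τ_l`.
-/

open Finset
open scoped NNReal

theorem measurable_argmax {α ι : Type*} [MeasurableSpace α] [Countable ι]
    {v : ι → α → ℝ} (hv : ∀ i, Measurable (v i)) (l : List ι) :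
    @Measurable α (Option ι) _ ⊤ fun a => l.argmax (v · a) := by
  let _ : MeasurableSpace (Option ι) := ⊤
  induction l with
  | nil => simp [measurable_const]
  | cons b l ih =>
    let step (p : α × Option ι) : Option ι :=
      p.2.elim (some b) fun c => if v b p.1 < v c p.1 then some c else some b
    have : (fun a => (b :: l).argmax (v · a)) = step ∘ fun a => (a, l.argmax (v · a)) := by
      ext1 a
      rw [List.argmax_cons, Function.comp_apply]
      cases l.argmax (v · a) <;> rfl
    rw [this]
    refine (measurable_from_prod_countable_left ?_).comp (measurable_id.prodMk ih)
    rintro (_ | c)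
    · exact measurable_const
    · exact Measurable.ite (measurableSet_lt (hv b) (hv c)) measurable_const measurable_const

theorem setIntegral_const_le_of_indep {Ω : Type*} {m m' mΩ : MeasurableSpace Ω}
    {μ : Measure Ω} (hm : m ≤ mΩ) (hm' : m' ≤ mΩ) (hind : Indep m m' μ) {S : Set Ω}
    (hS : MeasurableSet[m] S) {Z : Ω → ℝ} (hZ : Measurable[m'] Z) {c : ℝ}
    (hc : c ≤ ∫ ω, Z ω ∂μ) :
    ∫ _ in S, c ∂μ ≤ ∫ ω in S, Z ω ∂μ := by
  have h := (indep_of_indep_of_le_right hind hZ.comap_le).setIntegral_eq_mul (f := id) hm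
    (hZ.mono hm' le_rfl).aemeasurable hS measurable_id.aestronglyMeasurable
  rw [setIntegral_const, smul_eq_mul]
  exact h ▸ mul_le_mul_of_nonneg_left hc measureReal_nonneg

theorem integral_extMeasure_fst {Ω : Type} [MeasurableSpace Ω] (μ : Measure Ω) [SFinite μ]
    (f : Ω → ℝ) : ∫ ω', f ω'.1 ∂extMeasure μ = ∫ ω, f ω ∂μ := by
  simp [extMeasure, integral_fun_fst, Measure.real, Real.volume_Icc]

namespace DAGInst

variable {G : DAGInst}

theorem sum_map_le_sum_Ico_of_isChain {h : ℕ → ℝ} (hh : ∀ l, 0 ≤ h l) {f : G.E → ℝ}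
    (hf : ∀ e, f e ≤ ∑ l ∈ Ico (G.src e) (G.dst e), h l) :
    ∀ {p : List G.E} {m : ℕ}, p.IsChain (fun e f => G.dst e = G.src f) →
      (∀ e ∈ p.head?, m ≤ G.src e) → (p.map f).sum ≤ ∑ l ∈ Ico m G.n, h l
  | [], _, _, _ => by simpa using sum_nonneg fun l _ => hh l
  | e :: _, m, hc, hm => by
    rw [List.isChain_cons] at hc
    have hme : m ≤ G.src e := hm e rfl
    have hrest := sum_map_le_sum_Ico_of_isChain hh hf hc.2 fun e' he' => (hc.1 e' he').le
    have hsplit := sum_Ico_consecutive h hme ((G.src_lt_dst e).le.trans (G.dst_le_n e))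
    rw [← sum_Ico_consecutive h (G.src_lt_dst e).le (G.dst_le_n e)] at hsplit
    rw [List.map_cons, List.sum_cons]
    linarith [hf e, sum_nonneg fun l (_ : l ∈ Ico m (G.src e)) => hh l]

theorem pairwise_of_isChain {p : List G.E} (hp : p.IsChain fun e f => G.dst e = G.src f) :
    p.Pairwise fun e f => G.dst e ≤ G.src f := by
  have : Trans (fun e f : G.E => G.dst e ≤ G.src f) (fun e f => G.dst e ≤ G.src f)
      (fun e f => G.dst e ≤ G.src f) :=
    ⟨fun {_ b _} h₁ h₂ => by have := G.src_lt_dst b; omega⟩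
  exact List.isChain_iff_pairwise.mp (hp.imp fun _ _ h => h.le)

theorem sum_map_le_sum_of_isChain {w : G.E → ℝ} (hw : ∀ e, 0 ≤ w e) {p : List G.E}
    (hp : p.IsChain fun e f => G.dst e = G.src f) : (p.map w).sum ≤ ∑ e, w e := by
  classical
  have hnodup : p.Nodup := (pairwise_of_isChain hp).imp fun {a _} h hab =>
    (hab ▸ h).not_gt (hab ▸ G.src_lt_dst a)
  rw [← List.sum_toFinset w hnodup]
  exact sum_le_univ_sum_of_nonneg fun e => hw e

theorem OPTval_nonneg {Ω : Type} {W : G.E → Ω → ℝ} (hWnn : ∀ e ω, 0 ≤ W e ω)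
    {P : List G.E} (hP : G.IsPath P) (ω : Ω) : 0 ≤ G.OPTval W ω := by
  refine (List.sum_nonneg fun _ hx => ?_).trans
    (le_csSup ⟨∑ e, W e ω, ?_⟩ ⟨P, hP, rfl⟩ : G.pathValue P (W · ω) ≤ G.OPTval W ω)
  · obtain ⟨e, -, rfl⟩ := List.mem_map.mp hx
    exact hWnn e ω
  · rintro _ ⟨p, hp, rfl⟩
    exact sum_map_le_sum_of_isChain (hWnn · ω) hp.2.2

def HasSuccEdges (G : DAGInst) : Prop :=
  ∀ j < G.n, ∃ e, G.src e = j ∧ G.dst e = j + 1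

theorem hasSuccEdges_of_visits {P : List G.E} (hP : G.IsPath P)
    (hvis : ∀ v ≤ G.n, G.Visits P v) : G.HasSuccEdges := by
  have hpw : P.Pairwise fun e f => G.dst e ≤ G.src f ∨ G.dst f ≤ G.src e :=
    (pairwise_of_isChain hP.2.2).imp Or.inl
  have : Std.Symm fun e f : G.E => G.dst e ≤ G.src f ∨ G.dst f ≤ G.src e :=
    ⟨fun _ _ h => h.symm⟩
  intro j hj
  obtain ⟨e, heP, hej⟩ := (hvis (j + 1) hj).resolve_left j.succ_ne_zero
  refine ⟨e, le_antisymm (by have := G.src_lt_dst e; omega) ?_, hej⟩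
  -- `j` is entered by some `e' ≠ e`, and distinct edges of a path do not overlap
  rcases hvis j hj.le with rfl | ⟨e', he'P, he'j⟩
  · exact Nat.zero_le _
  · have := G.src_lt_dst e'
    rcases hpw.forall he'P heP (by rintro rfl; omega) with h | h <;> omega

def followPath (pk : ℕ → Option G.E) (j : ℕ) : List G.E :=
  match pk j with
  | some e => if G.src e = j then e :: followPath pk (G.dst e) else []
  | none => []
termination_by G.n - j
decreasing_by have := G.src_lt_dst e; have := G.dst_le_n e; omega

variable {pk : ℕ → Option G.E}

theorem followPath_eq_cons {j : ℕ} {e : G.E} (h : pk j = some e) (hs : G.src e = j) :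
    followPath pk j = e :: followPath pk (G.dst e) := by
  rw [followPath, h]
  simp [hs]

theorem followPath_eq_nil {j : ℕ} (h : pk j = none) : followPath pk j = [] := by
  rw [followPath, h]

theorem followPath_eq_nil_of_src_ne {j : ℕ} {e : G.E} (h : pk j = some e) (hs : G.src e ≠ j) :
    followPath pk j = [] := by
  rw [followPath, h]
  simp [hs]

theorem followPath_of_le {j : ℕ} (hj : G.n ≤ j) : followPath pk j = [] := by
  cases h : pk j with
  | none => exact followPath_eq_nil h
  | some e =>
    have := G.src_lt_dst e; have := G.dst_le_n e
    exact followPath_eq_nil_of_src_ne h (by omega)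

theorem src_of_mem_head?_followPath {j : ℕ} {e : G.E} (he : e ∈ (followPath pk j).head?) :
    G.src e = j := by
  cases h : pk j with
  | none => simp [followPath_eq_nil h] at he
  | some e' =>
    by_cases hs : G.src e' = j
    · simp only [followPath_eq_cons h hs, List.head?_cons, Option.mem_some_iff] at he
      exact he ▸ hs
    · simp [followPath_eq_nil_of_src_ne h hs] at he

theorem isChain_followPath (pk : ℕ → Option G.E) (j : ℕ) :
    (followPath pk j).IsChain fun e f => G.dst e = G.src f := by
  fun_induction followPath pk j with
  | case1 e _ ih => exact ih.cons fun _ h => (src_of_mem_head?_followPath h).symm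
  | case2 | case3 => exact List.IsChain.nil

theorem le_src_of_mem_followPath {j : ℕ} {e : G.E} (he : e ∈ followPath pk j) :
    j ≤ G.src e := by
  induction j using followPath.induct pk with
  | case1 e' he' ih =>
    rw [followPath_eq_cons he' rfl, List.mem_cons] at he
    rcases he with rfl | he
    · exact le_rfl
    · exact (G.src_lt_dst e').le.trans (ih he)
  | case2 x e' he' hne => simp [followPath_eq_nil_of_src_ne he' hne] at he
  | case3 x he' => simp [followPath_eq_nil he'] at he

theorem getLast?_followPath (hpk : ∀ j < G.n, ∃ e, pk j = some e ∧ G.src e = j) {j : ℕ}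
    (hj : j < G.n) : (followPath pk j).getLast?.map G.dst = some G.n := by
  induction j using followPath.induct pk with
  | case1 e he ih =>
    rw [followPath_eq_cons he rfl]
    rcases (G.dst_le_n e).lt_or_eq with hlt | heq
    · obtain ⟨x, hx, hxn⟩ := Option.map_eq_some_iff.mp (ih hlt)
      simp [List.getLast?_cons, hx, hxn]
    · rw [heq, followPath_of_le le_rfl]
      simp [heq]
  | case2 x e he hne =>
    obtain ⟨f, hf, hfs⟩ := hpk x hj
    rw [he, Option.some.injEq] at hf
    exact absurd (hf ▸ hfs) hne
  | case3 x he =>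
    obtain ⟨f, hf, _⟩ := hpk x hj
    simp [he] at hf

theorem isPath_followPath (hpk : ∀ j < G.n, ∃ e, pk j = some e ∧ G.src e = j) :
    G.IsPath (followPath pk 0) := by
  obtain ⟨e, he, hs⟩ := hpk 0 G.n_pos
  refine ⟨?_, getLast?_followPath hpk G.n_pos, isChain_followPath pk 0⟩
  simp [followPath_eq_cons he hs, hs]

theorem takeOut_followPath_of_lt {i j : ℕ} (hij : i < j) :
    G.takeOut (followPath pk j) i = none :=
  List.find?_eq_none.mpr fun e he => by
    have := le_src_of_mem_followPath he
    simp only [beq_iff_eq]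
    omega

theorem takeOut_followPath_congr {pk' : ℕ → Option G.E} {i j : ℕ}
    (h : ∀ l, j ≤ l → l ≤ i → pk l = pk' l) :
    G.takeOut (followPath pk j) i = G.takeOut (followPath pk' j) i := by
  rcases lt_or_ge i j with hij | hji
  · rw [takeOut_followPath_of_lt hij, takeOut_followPath_of_lt hij]
  induction j using followPath.induct pk with
  | case1 e he ih =>
    rw [followPath_eq_cons he rfl, followPath_eq_cons ((h _ le_rfl hji) ▸ he) rfl]
    simp only [takeOut, List.find?_cons]
    by_cases hei : G.src e = i
    · simp [hei]
    · rw [beq_false_of_ne hei]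
      have hlt := G.src_lt_dst e
      rcases lt_or_ge i (G.dst e) with hid | hid
      · exact (takeOut_followPath_of_lt hid).trans (takeOut_followPath_of_lt hid).symm
      · exact ih (fun l hl hli => h l (by omega) hli) hid
  | case2 x e he hne =>
    rw [followPath_eq_nil_of_src_ne he hne,
      followPath_eq_nil_of_src_ne ((h x le_rfl hji) ▸ he) hne]
  | case3 x he => rw [followPath_eq_nil he, followPath_eq_nil ((h x le_rfl hji) ▸ he)]

section Thresholds

variable (G) {Ω : Type} [MeasurableSpace Ω] (μ : Measure Ω) (W : G.E → Ω → ℝ)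

abbrev OutEdge (j : ℕ) : Type := {e : G.E // G.src e = j}

-- `attach` only serves the termination proof; `threshold_eq_integral_excess` is the readable form.
noncomputable def threshold (j : ℕ) : ℝ :=
  ∫ ω, ((⨆ e : G.OutEdge j,
      (W e ω - ∑ l ∈ (Ico (j + 1) (G.dst e)).attach, threshold l.1).toNNReal : ℝ≥0) : ℝ)
    ∂μ
termination_by G.n - j
decreasing_by have := mem_Ico.mp l.2; have := G.dst_le_n e; omega

noncomputable def cost (e : G.E) : ℝ :=
  ∑ l ∈ Ico (G.src e + 1) (G.dst e), G.threshold μ W l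

noncomputable def excess (j : ℕ) (ω : Ω) : ℝ :=
  ((⨆ e : G.OutEdge j, (W e ω - G.cost μ W e).toNNReal : ℝ≥0) : ℝ)

noncomputable def thresholdTail (k : ℕ) : ℝ :=
  ∑ l ∈ Ico k G.n, G.threshold μ W l

noncomputable def pick (j : ℕ) (ω : Ω) : Option G.E :=
  ((univ : Finset (G.OutEdge j)).toList.argmax fun e : G.OutEdge j =>
    W e ω - G.cost μ W e).map Subtype.val

variable {G μ W}

theorem threshold_eq_integral_excess (j : ℕ) :
    G.threshold μ W j = ∫ ω, G.excess μ W j ω ∂μ := by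
  rw [threshold]
  congr with ω
  congr with e
  obtain ⟨e, rfl⟩ := e
  rw [sum_attach _ fun l => G.threshold μ W l, cost]

theorem threshold_nonneg (j : ℕ) : 0 ≤ G.threshold μ W j := by
  rw [threshold_eq_integral_excess]
  exact integral_nonneg fun _ => NNReal.coe_nonneg _

theorem excess_nonneg (j : ℕ) (ω : Ω) : 0 ≤ G.excess μ W j ω :=
  NNReal.coe_nonneg _

theorem cost_nonneg (e : G.E) : 0 ≤ G.cost μ W e :=
  sum_nonneg fun l _ => threshold_nonneg l

theorem cost_eq_zero_of_dst_eq {e : G.E} (he : G.dst e = G.src e + 1) : G.cost μ W e = 0 := by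
  rw [cost, he, Ico_self, sum_empty]

theorem sub_cost_le_excess {j : ℕ} (e : G.OutEdge j) (ω : Ω) :
    W e ω - G.cost μ W e ≤ G.excess μ W j ω :=
  (Real.le_coe_toNNReal _).trans <| NNReal.coe_le_coe.mpr <|
    le_ciSup (f := fun e : G.OutEdge j => (W e ω - G.cost μ W e).toNNReal)
      (Finite.bddAbove_range _) e

theorem src_of_pick_eq_some {j : ℕ} {ω : Ω} {e : G.E} (h : G.pick μ W j ω = some e) :
    G.src e = j := by
  obtain ⟨e', -, rfl⟩ := Option.map_eq_some_iff.mp h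
  exact e'.2

theorem sub_cost_le_of_pick_eq_some {j : ℕ} {ω : Ω} {e : G.E} (h : G.pick μ W j ω = some e)
    (e' : G.OutEdge j) : W e' ω - G.cost μ W e' ≤ W e ω - G.cost μ W e := by
  obtain ⟨e'', he'', rfl⟩ := Option.map_eq_some_iff.mp h
  exact List.le_of_mem_argmax (mem_toList.mpr (mem_univ e')) he''

theorem exists_pick_eq_some {j : ℕ} (e : G.OutEdge j) (ω : Ω) :
    ∃ e', G.pick μ W j ω = some e' := by
  rw [← Option.isSome_iff_exists, pick, Option.isSome_map, Option.isSome_iff_ne_none, ne_eq,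
    List.argmax_eq_none, toList_eq_nil]
  exact (univ_nonempty_iff.mpr ⟨e⟩).ne_empty

theorem excess_eq_of_pick_eq_some (hsucc : G.HasSuccEdges) (hWnn : ∀ e ω, 0 ≤ W e ω) {j : ℕ}
    (hj : j < G.n) {ω : Ω} {e : G.E} (h : G.pick μ W j ω = some e) :
    G.excess μ W j ω = W e ω - G.cost μ W e := by
  obtain ⟨f, hfj, hf⟩ := hsucc j hj
  have hnonneg : 0 ≤ W e ω - G.cost μ W e := by
    have := sub_cost_le_of_pick_eq_some h ⟨f, hfj⟩
    rw [cost_eq_zero_of_dst_eq (hfj ▸ hf)] at this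
    linarith [hWnn f ω]
  refine le_antisymm ?_ (sub_cost_le_excess ⟨e, src_of_pick_eq_some h⟩ ω)
  rw [excess, ← Real.coe_toNNReal _ hnonneg, NNReal.coe_le_coe]
  exact ciSup_le' fun e' => Real.toNNReal_le_toNNReal (sub_cost_le_of_pick_eq_some h e')

theorem thresholdTail_eq_threshold_add {k : ℕ} (hk : k < G.n) :
    G.thresholdTail μ W k = G.threshold μ W k + G.thresholdTail μ W (k + 1) :=
  sum_eq_sum_Ico_succ_bot hk _

theorem thresholdTail_succ_eq_cost_add {k : ℕ} (e : G.OutEdge k) :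
    G.thresholdTail μ W (k + 1) = G.cost μ W e + G.thresholdTail μ W (G.dst e) := by
  obtain ⟨e, rfl⟩ := e
  rw [thresholdTail, thresholdTail, cost,
    sum_Ico_consecutive _ (G.src_lt_dst e) (G.dst_le_n e)]

theorem weight_le_sum_Ico (e : G.E) (ω : Ω) :
    W e ω ≤ ∑ l ∈ Ico (G.src e) (G.dst e), (G.threshold μ W l + G.excess μ W l ω) := by
  have hgain := sub_cost_le_excess (μ := μ) (W := W) ⟨e, rfl⟩ ω
  have hτ := threshold_nonneg (μ := μ) (W := W) (G.src e)
  have hX := sum_nonneg fun l (_ : l ∈ Ico (G.src e + 1) (G.dst e)) =>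
    excess_nonneg (μ := μ) (W := W) l ω
  rw [cost] at hgain
  rw [sum_eq_sum_Ico_succ_bot (G.src_lt_dst e), sum_add_distrib]
  linarith

theorem sum_map_weight_le {p : List G.E} (hp : p.IsChain fun e f => G.dst e = G.src f) {m : ℕ}
    (hm : ∀ e ∈ p.head?, m ≤ G.src e) (ω : Ω) :
    (p.map (W · ω)).sum ≤ ∑ l ∈ Ico m G.n, (G.threshold μ W l + G.excess μ W l ω) :=
  sum_map_le_sum_Ico_of_isChain (fun l => add_nonneg (threshold_nonneg l) (excess_nonneg l ω))
    (weight_le_sum_Ico · ω) hp hm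

end Thresholds

section Measurability

variable (G) {Ω : Type}

def sigmaOut (W : G.E → Ω → ℝ) (S : Set ℕ) : MeasurableSpace Ω :=
  ⨆ (e : G.E) (_ : G.src e ∈ S), MeasurableSpace.comap (W e) inferInstance

variable {G} {W : G.E → Ω → ℝ}

theorem measurable_sigmaOut {S : Set ℕ} {e : G.E} (he : G.src e ∈ S) :
    Measurable[G.sigmaOut W S] (W e) :=
  Measurable.of_comap_le (le_iSup₂_of_le e he le_rfl)

theorem sigmaOut_mono {S T : Set ℕ} (h : S ⊆ T) : G.sigmaOut W S ≤ G.sigmaOut W T :=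
  iSup₂_le fun _ he => (measurable_sigmaOut (h he)).comap_le

theorem measurable_fst_infoAt (i : ℕ) :
    @Measurable (Ω × ℝ) Ω (G.infoAt W i) (G.sigmaOut W (Set.Iic i)) Prod.fst := by
  refine Measurable.of_comap_le ?_
  simp only [sigmaOut, MeasurableSpace.comap_iSup, MeasurableSpace.comap_comp]
  exact le_sup_of_le_right le_rfl

variable [MeasurableSpace Ω]

theorem sigmaOut_le (hW : ∀ e, Measurable (W e)) (S : Set ℕ) :
    G.sigmaOut W S ≤ ‹MeasurableSpace Ω› :=
  iSup₂_le fun e _ => (hW e).comap_le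

theorem indep_sigmaOut {μ : Measure Ω} (hW : ∀ e, Measurable (W e))
    (hind : G.IndepWeights W μ) {S T : Set ℕ} (hST : Disjoint S T) :
    Indep (G.sigmaOut W S) (G.sigmaOut W T) μ := by
  let f (i : ℕ) (ω : Ω) : G.OutEdge i → ℝ := fun e => W e ω
  have hle (S : Set ℕ) :
      G.sigmaOut W S ≤ ⨆ i ∈ S, MeasurableSpace.comap (f i) inferInstance :=
    iSup₂_le fun e he => le_iSup₂_of_le (G.src e) he <|
      ((measurable_pi_apply (⟨e, rfl⟩ : G.OutEdge (G.src e))).comp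
        (comap_measurable (f (G.src e)))).comap_le
  exact indep_of_indep_of_le_left (indep_of_indep_of_le_right
    (indep_iSup_of_disjoint (fun i => (measurable_pi_lambda (f i) fun e => hW e).comap_le)
      hind.iIndep hST) (hle T)) (hle S)

theorem measurable_pick (μ : Measure Ω) (j : ℕ) :
    @Measurable Ω (Option G.E) (G.sigmaOut W {j}) ⊤ (G.pick μ W j) :=
  letI : MeasurableSpace (Option G.E) := ⊤
  measurable_from_top.comp <| @measurable_argmax _ _ (G.sigmaOut W {j}) _ _
    (fun e => (measurable_sigmaOut e.2).sub_const _) _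

theorem measurable_excess (μ : Measure Ω) (j : ℕ) :
    Measurable[G.sigmaOut W {j}] (G.excess μ W j) :=
  (Measurable.iSup fun e =>
    ((measurable_sigmaOut e.2).sub_const _).real_toNNReal).coe_nnreal_real

theorem integrable_excess {μ : Measure Ω} (hW : ∀ e, Measurable (W e))
    (hWnn : ∀ e ω, 0 ≤ W e ω) (hWint : ∀ e, Integrable (W e) μ) (j : ℕ) :
    Integrable (G.excess μ W j) μ := by
  refine (integrable_finsetSum univ fun e _ => hWint e).mono'
    ((measurable_excess μ j).mono (sigmaOut_le hW _) le_rfl).aestronglyMeasurable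
    (ae_of_all _ fun ω => ?_)
  rw [Real.norm_of_nonneg (excess_nonneg j ω), excess, ← Real.coe_toNNReal _
    (sum_nonneg fun e _ => hWnn e ω), NNReal.coe_le_coe]
  refine ciSup_le' fun e => Real.toNNReal_le_toNNReal ?_
  linarith [cost_nonneg (μ := μ) (W := W) e.1,
    single_le_sum (fun e _ => hWnn e ω) (mem_univ e.1)]

end Measurability

section Algorithm

variable (G) {Ω : Type} [MeasurableSpace Ω] (μ : Measure Ω) (W : G.E → Ω → ℝ)

noncomputable def algorithm (ω' : Ω × ℝ) : List G.E :=
  followPath (G.pick μ W · ω'.1) 0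

noncomputable def algValue (k : ℕ) (ω : Ω) : ℝ :=
  G.pathValue (followPath (G.pick μ W · ω) k) (W · ω)

def pickSet (k : ℕ) (e : G.E) : Set Ω :=
  {ω | G.pick μ W k ω = some e}

noncomputable def stepValue (g : ℕ → Ω → ℝ) (k : ℕ) (ω : Ω) : ℝ :=
  ∑ e : G.OutEdge k, (G.pickSet μ W k e).indicator (fun ω => W e ω + g (G.dst e) ω) ω

variable {G μ W}

theorem isOnlineAlg_algorithm (hsucc : G.HasSuccEdges) : G.IsOnlineAlg W (G.algorithm μ W) := by
  refine ⟨fun ω' => isPath_followPath fun j hj => ?_, fun i _ => ?_⟩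
  · obtain ⟨f, hf, -⟩ := hsucc j hj
    obtain ⟨e, he⟩ := exists_pick_eq_some (μ := μ) (W := W) ⟨f, hf⟩ ω'.1
    exact ⟨e, he, src_of_pick_eq_some he⟩
  let _ : MeasurableSpace (Option G.E) := ⊤
  -- the edge taken out of `i` is a function of the choices at the nodes `0, …, i`
  let F (v : Fin (i + 1) → Option G.E) : Option G.E :=
    G.takeOut (followPath (fun l => if h : l < i + 1 then v ⟨l, h⟩ else none) 0) i
  have hF : (fun ω' => G.takeOut (G.algorithm μ W ω') i) =
      F ∘ fun ω' (l : Fin (i + 1)) => G.pick μ W l ω'.1 :=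
    funext fun ω' => takeOut_followPath_congr fun l _ hl => by simp [Nat.lt_succ_of_le hl]
  rw [hF]
  have hpicks : Measurable[G.infoAt W i] fun ω' (l : Fin (i + 1)) => G.pick μ W l ω'.1 :=
    @measurable_pi_lambda _ _ _ (G.infoAt W i) _ _ fun l =>
      ((measurable_pick μ l).mono (sigmaOut_mono (by simpa using l.is_le)) le_rfl).comp
        (measurable_fst_infoAt i)
  exact (measurable_of_countable F).comp hpicks

theorem stepValue_eq_elim (g : ℕ → Ω → ℝ) (k : ℕ) (ω : Ω) :
    G.stepValue μ W g k ω = (G.pick μ W k ω).elim 0 fun e => W e ω + g (G.dst e) ω := by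
  rw [stepValue]
  cases h : G.pick μ W k ω with
  | none => simp [pickSet, h]
  | some e =>
    rw [sum_eq_single ⟨e, src_of_pick_eq_some h⟩]
    · simp [pickSet, h]
    · intro e' _ he'
      refine Set.indicator_of_notMem (fun h' => he' (Subtype.ext ?_)) _
      simp_all [pickSet]
    · simp

theorem algValue_eq_stepValue (k : ℕ) (ω : Ω) :
    G.algValue μ W k ω = G.stepValue μ W (G.algValue μ W) k ω := by
  rw [stepValue_eq_elim]
  cases h : G.pick μ W k ω with
  | none => simp [algValue, followPath_eq_nil (pk := (G.pick μ W · ω)) h, pathValue]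
  | some e =>
    simp [algValue, followPath_eq_cons (pk := (G.pick μ W · ω)) h (src_of_pick_eq_some h),
      pathValue]

theorem excess_add_thresholdTail_eq_stepValue (hsucc : G.HasSuccEdges)
    (hWnn : ∀ e ω, 0 ≤ W e ω) {k : ℕ} (hk : k < G.n) (ω : Ω) :
    G.excess μ W k ω + G.thresholdTail μ W (k + 1) =
      G.stepValue μ W (fun d _ => G.thresholdTail μ W d) k ω := by
  obtain ⟨f, hf, -⟩ := hsucc k hk
  obtain ⟨e, he⟩ := exists_pick_eq_some (μ := μ) (W := W) ⟨f, hf⟩ ω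
  rw [stepValue_eq_elim, he, Option.elim_some,
    excess_eq_of_pick_eq_some hsucc hWnn hk he,
    thresholdTail_succ_eq_cost_add ⟨e, src_of_pick_eq_some he⟩]
  ring

theorem measurableSet_pickSet (k : ℕ) (e : G.E) :
    MeasurableSet[G.sigmaOut W {k}] (G.pickSet μ W k e) :=
  measurable_pick μ k (t := {some e}) MeasurableSpace.measurableSet_top

theorem measurable_stepValue {g : ℕ → Ω → ℝ} {k : ℕ}
    (hg : ∀ e : G.OutEdge k, Measurable[G.sigmaOut W (Set.Ici k)] (g (G.dst e))) :
    Measurable[G.sigmaOut W (Set.Ici k)] (G.stepValue μ W g k) := by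
  have hk : {k} ⊆ Set.Ici k := Set.singleton_subset_iff.mpr (Set.mem_Ici.mpr le_rfl)
  refine Finset.measurable_sum _ fun e _ => ?_
  refine ((measurable_sigmaOut (hk e.2)).add (hg e)).indicator ?_
  exact sigmaOut_mono hk _ (measurableSet_pickSet (μ := μ) k e.1)

theorem measurable_algValue (k : ℕ) :
    Measurable[G.sigmaOut W (Set.Ici k)] (G.algValue μ W k) := by
  rw [funext (algValue_eq_stepValue k)]
  refine measurable_stepValue fun e => (measurable_algValue (G.dst e)).mono
    (sigmaOut_mono (Set.Ici_subset_Ici.mpr (e.2 ▸ G.src_lt_dst e).le)) le_rfl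
termination_by G.n - k
decreasing_by have := e.2; have := G.src_lt_dst e; have := G.dst_le_n e; omega

theorem algValue_nonneg (hWnn : ∀ e ω, 0 ≤ W e ω) (k : ℕ) (ω : Ω) :
    0 ≤ G.algValue μ W k ω :=
  List.sum_nonneg fun _ hx => by
    obtain ⟨e, -, rfl⟩ := List.mem_map.mp hx
    exact hWnn e ω

theorem algValue_le (k : ℕ) (ω : Ω) :
    G.algValue μ W k ω ≤ ∑ l ∈ Ico k G.n, (G.threshold μ W l + G.excess μ W l ω) :=
  sum_map_weight_le (isChain_followPath _ k)
    (fun _ he => (src_of_mem_head?_followPath he).ge) ω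

theorem integrable_algValue [IsFiniteMeasure μ] (hW : ∀ e, Measurable (W e))
    (hWnn : ∀ e ω, 0 ≤ W e ω) (hWint : ∀ e, Integrable (W e) μ) (k : ℕ) :
    Integrable (G.algValue μ W k) μ := by
  refine (integrable_finsetSum (Ico k G.n) fun l _ =>
    (integrable_const (G.threshold μ W l)).add (integrable_excess hW hWnn hWint l)).mono'
    ((measurable_algValue k).mono (sigmaOut_le hW _) le_rfl).aestronglyMeasurable
    (ae_of_all _ fun ω => ?_)
  rw [Real.norm_of_nonneg (algValue_nonneg hWnn k ω)]
  exact algValue_le k ω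

theorem integral_stepValue_mono (hW : ∀ e, Measurable (W e))
    (hWint : ∀ e, Integrable (W e) μ) {g g' : ℕ → Ω → ℝ}
    (hg : ∀ d, Integrable (g d) μ) (hg' : ∀ d, Integrable (g' d) μ) {k : ℕ}
    (h : ∀ e : G.OutEdge k, ∫ ω in G.pickSet μ W k e, g (G.dst e) ω ∂μ ≤
      ∫ ω in G.pickSet μ W k e, g' (G.dst e) ω ∂μ) :
    ∫ ω, G.stepValue μ W g k ω ∂μ ≤ ∫ ω, G.stepValue μ W g' k ω ∂μ := by
  have hS (e : G.E) : MeasurableSet (G.pickSet μ W k e) :=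
    sigmaOut_le hW _ _ (measurableSet_pickSet k e)
  have hsplit (g : ℕ → Ω → ℝ) (hg : ∀ d, Integrable (g d) μ) :
      ∫ ω, G.stepValue μ W g k ω ∂μ = ∑ e : G.OutEdge k,
        (∫ ω in G.pickSet μ W k e, W e ω ∂μ +
          ∫ ω in G.pickSet μ W k e, g (G.dst e) ω ∂μ) := by
    simp only [stepValue]
    rw [integral_finsetSum (f := fun (e : G.OutEdge k) ω =>
      (G.pickSet μ W k e).indicator (fun ω => W e ω + g (G.dst e) ω) ω) _
      fun e _ => ((hWint e).add (hg (G.dst e))).indicator (hS e)]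
    refine sum_congr rfl fun e _ => ?_
    rw [integral_indicator (hS e), integral_add (hWint e).integrableOn (hg _).integrableOn]
  rw [hsplit g hg, hsplit g' hg']
  exact sum_le_sum fun e _ => (add_le_add_iff_left _).mpr (h e)

theorem thresholdTail_le_integral_algValue [IsProbabilityMeasure μ]
    (hW : ∀ e, Measurable (W e)) (hWnn : ∀ e ω, 0 ≤ W e ω)
    (hWint : ∀ e, Integrable (W e) μ) (hind : G.IndepWeights W μ) (hsucc : G.HasSuccEdges)
    (k : ℕ) :
    G.thresholdTail μ W k ≤ ∫ ω, G.algValue μ W k ω ∂μ := by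
  rcases le_or_gt G.n k with hk | hk
  · rw [thresholdTail, Ico_eq_empty_of_le hk, sum_empty]
    exact integral_nonneg (algValue_nonneg hWnn k)
  calc G.thresholdTail μ W k
      = ∫ ω, (G.excess μ W k ω + G.thresholdTail μ W (k + 1)) ∂μ := by
        rw [integral_add (integrable_excess hW hWnn hWint k) (integrable_const _),
          integral_const, ← threshold_eq_integral_excess, thresholdTail_eq_threshold_add hk]
        simp
    _ = ∫ ω, G.stepValue μ W (fun d _ => G.thresholdTail μ W d) k ω ∂μ := by
        simp_rw [excess_add_thresholdTail_eq_stepValue hsucc hWnn hk]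
    _ ≤ ∫ ω, G.stepValue μ W (G.algValue μ W) k ω ∂μ := by
        refine integral_stepValue_mono hW hWint (fun _ => integrable_const _)
          (integrable_algValue hW hWnn hWint) fun e => ?_
        -- the choice at `k` is independent of the weights out of the nodes `≥ dst e > k`
        have hdisj : Disjoint {k} (Set.Ici (G.dst e)) := by
          have := G.src_lt_dst e
          simp only [Set.disjoint_singleton_left, Set.mem_Ici, not_le]
          omega
        exact setIntegral_const_le_of_indep (sigmaOut_le hW _) (sigmaOut_le hW _)
          (indep_sigmaOut hW hind hdisj) (measurableSet_pickSet k e)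
          (measurable_algValue _)
          (thresholdTail_le_integral_algValue hW hWnn hWint hind hsucc (G.dst e))
    _ = ∫ ω, G.algValue μ W k ω ∂μ := by
        simp_rw [← algValue_eq_stepValue]
termination_by G.n - k
decreasing_by have := e.2; have := G.src_lt_dst e; omega

end Algorithm

section Prophet

variable {Ω : Type} [MeasurableSpace Ω] {μ : Measure Ω} {W : G.E → Ω → ℝ}

theorem OPTval_le {P : List G.E} (hP : G.IsPath P) (ω : Ω) :
    G.OPTval W ω ≤ ∑ l ∈ Ico 0 G.n, (G.threshold μ W l + G.excess μ W l ω) := by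
  refine csSup_le ⟨_, P, hP, rfl⟩ ?_
  rintro _ ⟨p, hp, rfl⟩
  exact sum_map_weight_le hp.2.2 (fun _ _ => Nat.zero_le _) ω

theorem integral_OPTval_le [IsProbabilityMeasure μ] (hW : ∀ e, Measurable (W e))
    (hWnn : ∀ e ω, 0 ≤ W e ω) (hWint : ∀ e, Integrable (W e) μ) {P : List G.E}
    (hP : G.IsPath P) : ∫ ω, G.OPTval W ω ∂μ ≤ 2 * G.thresholdTail μ W 0 := by
  have hint (l : ℕ) : Integrable (fun ω => G.threshold μ W l + G.excess μ W l ω) μ :=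
    (integrable_const _).add (integrable_excess hW hWnn hWint l)
  calc ∫ ω, G.OPTval W ω ∂μ
      ≤ ∫ ω, ∑ l ∈ Ico 0 G.n, (G.threshold μ W l + G.excess μ W l ω) ∂μ :=
        integral_mono_of_nonneg (ae_of_all _ (OPTval_nonneg hWnn hP))
          (integrable_finsetSum _ fun l _ => hint l) (ae_of_all _ (OPTval_le hP))
    _ = 2 * G.thresholdTail μ W 0 := by
        rw [integral_finsetSum _ fun l _ => hint l, thresholdTail, mul_sum]
        refine sum_congr rfl fun l _ => ?_
        rw [integral_add (integrable_const _) (integrable_excess hW hWnn hWint l), integral_const,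
          ← threshold_eq_integral_excess]
        simp [two_mul]

end Prophet

end DAGInst

/-- **Theorem 3.1** (width-1 prophet inequality). For every DAG instance of width 1
(i.e., possessing a focal `s,t`-path `P₀` that visits every node), there is an online
algorithm `A` with `E[Σ_{e ∈ A} W_e] ≥ (1/2)·E[OPT]`. -/
theorem width1_prophet_inequality
    (G : DAGInst) {Ω : Type} [MeasurableSpace Ω]
    (μ : Measure Ω) [IsProbabilityMeasure μ] (W : G.E → Ω → ℝ)
    (hWmeas : ∀ e, Measurable (W e)) (hWnn : ∀ e ω, 0 ≤ W e ω)
    (hWint : ∀ e, Integrable (W e) μ) (hindep : G.IndepWeights W μ)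
    (P₀ : List G.E) (hP₀ : G.IsPath P₀) (hfocal : ∀ v ≤ G.n, G.Visits P₀ v) :
    ∃ A : Ω × ℝ → List G.E, G.IsOnlineAlg W A ∧
      (1 / 2 : ℝ) * ∫ ω, G.OPTval W ω ∂μ ≤
        ∫ ω', G.pathValue (A ω') (fun e => W e ω'.1) ∂(extMeasure μ) := by
  have hsucc := DAGInst.hasSuccEdges_of_visits hP₀ hfocal
  refine ⟨G.algorithm μ W, DAGInst.isOnlineAlg_algorithm hsucc, ?_⟩
  calc (1 / 2 : ℝ) * ∫ ω, G.OPTval W ω ∂μ ≤ G.thresholdTail μ W 0 := by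
        linarith [DAGInst.integral_OPTval_le hWmeas hWnn hWint hP₀ (μ := μ)]
    _ ≤ ∫ ω, G.algValue μ W 0 ω ∂μ :=
        DAGInst.thresholdTail_le_integral_algValue hWmeas hWnn hWint hindep hsucc 0
    _ = _ := (integral_extMeasure_fst μ _).symm
end

section
/- Lemma (per-path decomposition, used in the proof of Theorem 4.1). Let G be a DAG instance with deterministic nonnegative weights w : E → ℝ≥0, and let P_1,…,P_k be s,t-paths such that every node is visited by some P_i. Fix an index i and let V_i be the set of nodes visited by P_i. Define the graph G_i on node set V_i whose edge set consists of: (a) every edge e ∈ E with src(e) ∈ V_i and dst(e) ∈ V_i, with weight w_e; and (b) for every edge e ∈ E with src(e) ∈ V_i and dst(e) ∉ V_i, an artificial edge from src(e) to v'(e) with weight w_e, where v'(e) is the smallest element of V_i that is reachable from dst(e) in G (such a node exists since t = n ∈ V_i is reachable from every node of the covered graph). Then for every s,t-path Q of G, the graph G_i contains an s,t-path whose total weight is at least Σ_{e ∈ Q : src(e) ∈ V_i} w_e. -/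
open MeasureTheory ProbabilityTheory

/-!
Follow `Q` while tracking the smallest node of `V(P_i)` reachable from the current node, its
re-entry node. An edge of `Q` leaving a node of `V(P_i)` is matched by an edge of `G_i` of the
same weight ending exactly at the re-entry node of its head: the original edge if the head lies
in `V(P_i)`, the artificial one otherwise. While `Q` runs outside `V(P_i)` the re-entry node can
only increase, and the gap is bridged along `P_i` itself, which costs nothing since the weights
are nonnegative.
-/

def IsWalk {α : Type*} (src dst : α → ℕ) (u v : ℕ) : List α → Prop
  | [] => u = v
  | e :: p => src e = u ∧ IsWalk src dst (dst e) v p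

namespace IsWalk

section General

variable {α β : Type*} {src dst : α → ℕ} {u v x : ℕ} {p q : List α}

@[simp]
theorem nil_iff : IsWalk src dst u v [] ↔ u = v := Iff.rfl

@[simp]
theorem cons_iff {e : α} :
    IsWalk src dst u v (e :: p) ↔ src e = u ∧ IsWalk src dst (dst e) v p :=
  Iff.rfl

theorem append_iff :
    IsWalk src dst u v (p ++ q) ↔ ∃ x, IsWalk src dst u x p ∧ IsWalk src dst x v q := by
  induction p generalizing u with
  | nil => simp
  | cons e p ih => simp [ih, and_assoc]

theorem append (hp : IsWalk src dst u x p) (hq : IsWalk src dst x v q) :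
    IsWalk src dst u v (p ++ q) :=
  append_iff.2 ⟨x, hp, hq⟩

theorem map_iff {g : β → α} {p : List β} :
    IsWalk src dst u v (p.map g) ↔ IsWalk (src ∘ g) (dst ∘ g) u v p := by
  induction p generalizing u with
  | nil => simp
  | cons e p ih => simp [ih]

theorem iff_isChain :
    IsWalk src dst u v p ↔ (p = [] ∧ u = v) ∨
      (p.head?.map src = some u ∧ p.getLast?.map dst = some v ∧
        p.IsChain fun e f => dst e = src f) := by
  induction p generalizing u with
  | nil => simp
  | cons e p ih =>
    rw [cons_iff, ih]
    cases p with
    | nil => simp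
    | cons f p =>
      simp [List.isChain_cons_cons, eq_comm (a := u), eq_comm (a := src f), and_left_comm]

theorem eq_or_exists_dst_eq (h : IsWalk src dst u v p) : v = u ∨ ∃ e ∈ p, dst e = v := by
  induction p generalizing u with
  | nil => exact Or.inl h.symm
  | cons e p ih =>
    rcases ih h.2 with hv | ⟨f, hf, hv⟩
    · exact Or.inr ⟨e, List.mem_cons_self, hv.symm⟩
    · exact Or.inr ⟨f, List.mem_cons_of_mem e hf, hv⟩

theorem src_eq_or_exists_dst_eq (h : IsWalk src dst u v p) {e : α} (he : e ∈ p) :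
    src e = u ∨ ∃ f ∈ p, dst f = src e := by
  induction p generalizing u with
  | nil => simp at he
  | cons f p ih =>
    obtain ⟨rfl, h⟩ := h
    rcases List.mem_cons.1 he with rfl | he
    · exact Or.inl rfl
    rcases ih h he with hu | ⟨g, hg, hu⟩
    · exact Or.inr ⟨f, List.mem_cons_self, hu.symm⟩
    · exact Or.inr ⟨g, List.mem_cons_of_mem f hg, hu⟩

theorem exists_split (h : IsWalk src dst u v p) (hx : x = u ∨ ∃ e ∈ p, dst e = x) :
    ∃ p₁ p₂, p = p₁ ++ p₂ ∧ IsWalk src dst u x p₁ ∧ IsWalk src dst x v p₂ := by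
  induction p generalizing u with
  | nil => simp_all
  | cons e p ih =>
    obtain ⟨rfl, h⟩ := h
    rcases hx with rfl | ⟨f, hf, rfl⟩
    · exact ⟨[], e :: p, rfl, rfl, rfl, h⟩
    rcases List.mem_cons.1 hf with rfl | hf
    · exact ⟨[f], p, rfl, ⟨rfl, rfl⟩, h⟩
    obtain ⟨p₁, p₂, rfl, h₁, h₂⟩ := ih h (Or.inr ⟨f, hf, rfl⟩)
    exact ⟨e :: p₁, p₂, rfl, ⟨rfl, h₁⟩, h₂⟩

end General

section DAG

variable {G : DAGInst} {u v : ℕ} {p : List G.E}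

theorem le_src (h : IsWalk G.src G.dst u v p) {e : G.E} (he : e ∈ p) : u ≤ G.src e := by
  induction p generalizing u with
  | nil => simp at he
  | cons f p ih =>
    obtain ⟨rfl, h⟩ := h
    rcases List.mem_cons.1 he with rfl | he
    · exact le_rfl
    · exact (G.src_lt_dst f).le.trans (ih h he)

protected theorem le (h : IsWalk G.src G.dst u v p) : u ≤ v := by
  induction p generalizing u with
  | nil => exact h.le
  | cons f p ih => exact h.1 ▸ (G.src_lt_dst f).le.trans (ih h.2)

end DAG

end IsWalk

namespace DAGInst

variable {G : DAGInst} {u v x y : ℕ}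

theorem reaches_iff : G.Reaches u v ↔ ∃ p, IsWalk G.src G.dst u v p := by
  simp only [Reaches, IsWalk.iff_isChain, exists_or, exists_and_right, exists_eq, true_and]
  rfl

theorem isPath_iff {p : List G.E} : G.IsPath p ↔ IsWalk G.src G.dst 0 G.n p := by
  have h0n : 0 ≠ G.n := by have := G.n_pos; omega
  simp only [IsWalk.iff_isChain, h0n, and_false, false_or]
  rfl

theorem Reaches.trans (h₁ : G.Reaches u v) (h₂ : G.Reaches v x) : G.Reaches u x := by
  obtain ⟨p, hp⟩ := reaches_iff.1 h₁
  obtain ⟨q, hq⟩ := reaches_iff.1 h₂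
  exact reaches_iff.2 ⟨p ++ q, hp.append hq⟩

theorem Reaches.le (h : G.Reaches u v) : u ≤ v := by
  obtain ⟨p, hp⟩ := reaches_iff.1 h
  exact hp.le

section Visits

variable {Pi : List G.E} (hPi : IsWalk G.src G.dst 0 G.n Pi)
include hPi

theorem visits_n : G.Visits Pi G.n :=
  hPi.eq_or_exists_dst_eq

theorem visits_src {e : G.E} (he : e ∈ Pi) : G.Visits Pi (G.src e) :=
  hPi.src_eq_or_exists_dst_eq he

theorem exists_subwalk (hx : G.Visits Pi x) (hy : G.Visits Pi y) (hxy : x ≤ y) :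
    ∃ r, r <:+: Pi ∧ IsWalk G.src G.dst x y r := by
  obtain ⟨p₁, p₂, rfl, h₁, h₂⟩ := hPi.exists_split hy
  have hx₁ : x = 0 ∨ ∃ e ∈ p₁, G.dst e = x := by
    rcases hx with rfl | ⟨e, he, rfl⟩
    · exact Or.inl rfl
    rcases List.mem_append.1 he with he | he
    · exact Or.inr ⟨e, he, rfl⟩
    · exact absurd ((h₂.le_src he).trans_lt (G.src_lt_dst e)) hxy.not_gt
  obtain ⟨q₁, q₂, rfl, -, h₂'⟩ := h₁.exists_split hx₁
  exact ⟨q₂, ⟨q₁, p₂, rfl⟩, h₂'⟩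

end Visits

variable (G) in
/-- The node `v'(e)` of an artificial edge `e` is `G.reentry Pi (G.dst e)`. -/
noncomputable def reentry (Pi : List G.E) (u : ℕ) : ℕ :=
  sInf {v | G.Visits Pi v ∧ G.Reaches u v}

variable {Pi : List G.E}

theorem reentry_le (hv : G.Visits Pi v) (h : G.Reaches u v) : G.reentry Pi u ≤ v :=
  Nat.sInf_le ⟨hv, h⟩

theorem reentry_spec (hn : G.Visits Pi G.n) (hu : G.Reaches u G.n) :
    G.Visits Pi (G.reentry Pi u) ∧ G.Reaches u (G.reentry Pi u) :=
  Nat.sInf_mem (s := {v | G.Visits Pi v ∧ G.Reaches u v}) ⟨G.n, hn, hu⟩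

theorem reentry_eq_self (hu : G.Visits Pi u) : G.reentry Pi u = u :=
  (reentry_le hu (Or.inl rfl)).antisymm (le_csInf ⟨u, hu, Or.inl rfl⟩ fun _ hv => hv.2.le)

theorem reentry_le_reentry (hn : G.Visits Pi G.n) (huv : G.Reaches u v)
    (hv : G.Reaches v G.n) : G.reentry Pi u ≤ G.reentry Pi v :=
  have hspec := reentry_spec hn hv
  reentry_le hspec.1 (huv.trans hspec.2)

variable (G) in
def IsAuxWalk (Pi : List G.E) (u v : ℕ) (p : List (G.E ⊕ G.E)) : Prop :=
  IsWalk G.auxSrc (G.auxDst Pi) u v p ∧ ∀ f ∈ p, G.auxValid Pi f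

theorem isAuxPath_iff {p : List (G.E ⊕ G.E)} : G.IsAuxPath Pi p ↔ G.IsAuxWalk Pi 0 G.n p := by
  have h0n : 0 ≠ G.n := by have := G.n_pos; omega
  simp only [IsAuxWalk, IsWalk.iff_isChain, h0n, and_false, false_or]
  exact and_comm

theorem IsAuxWalk.append {p q : List (G.E ⊕ G.E)}
    (hp : G.IsAuxWalk Pi u x p) (hq : G.IsAuxWalk Pi x v q) : G.IsAuxWalk Pi u v (p ++ q) :=
  ⟨hp.1.append hq.1, fun f hf => (List.mem_append.1 hf).elim (hp.2 f) (hq.2 f)⟩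

theorem IsAuxWalk.cons {p : List (G.E ⊕ G.E)} {f : G.E ⊕ G.E}
    (hsrc : G.auxSrc f = u) (hf : G.auxValid Pi f) (hp : G.IsAuxWalk Pi (G.auxDst Pi f) v p) :
    G.IsAuxWalk Pi u v (f :: p) :=
  ⟨⟨hsrc, hp.1⟩, List.forall_mem_cons.2 ⟨hf, hp.2⟩⟩

theorem exists_auxWalk_of_le (hPi : IsWalk G.src G.dst 0 G.n Pi)
    (hx : G.Visits Pi x) (hy : G.Visits Pi y) (hxy : x ≤ y) :
    ∃ p, G.IsAuxWalk Pi x y p := by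
  obtain ⟨r, hr, hrw⟩ := exists_subwalk hPi hx hy hxy
  refine ⟨r.map .inl, IsWalk.map_iff.2 hrw, ?_⟩
  simp only [List.mem_map, forall_exists_index, and_imp, forall_apply_eq_imp_iff₂]
  exact fun e he => ⟨visits_src hPi (hr.subset he), .inr ⟨e, hr.subset he, rfl⟩⟩

theorem exists_auxEdge_to_reentry (w : G.E → ℝ) {e : G.E} (he : G.Visits Pi (G.src e)) :
    ∃ f, G.auxSrc f = G.src e ∧ G.auxDst Pi f = G.reentry Pi (G.dst e) ∧ G.auxValid Pi f ∧
      G.auxWeight w f = w e := by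
  by_cases hd : G.Visits Pi (G.dst e)
  · exact ⟨.inl e, rfl, (reentry_eq_self hd).symm, ⟨he, hd⟩, rfl⟩
  · exact ⟨.inr e, rfl, rfl, ⟨he, hd⟩, rfl⟩

theorem sum_auxWeight_nonneg {w : G.E → ℝ} (hw : ∀ e, 0 ≤ w e) (p : List (G.E ⊕ G.E)) :
    0 ≤ (p.map (G.auxWeight w)).sum :=
  List.sum_nonneg <| by
    simp only [List.mem_map, forall_exists_index, and_imp, forall_apply_eq_imp_iff₂]
    rintro (e | e) - <;> exact hw e

theorem exists_auxWalk_from_reentry {w : G.E → ℝ} (hw : ∀ e, 0 ≤ w e)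
    (hPi : IsWalk G.src G.dst 0 G.n Pi) {Q : List G.E} (hQ : IsWalk G.src G.dst u G.n Q) :
    ∃ p, G.IsAuxWalk Pi (G.reentry Pi u) G.n p ∧
      ((Q.filter fun e => decide (G.Visits Pi (G.src e))).map w).sum ≤
        (p.map (G.auxWeight w)).sum := by
  induction Q generalizing u with
  | nil =>
    obtain rfl : u = G.n := hQ
    exact ⟨[], by rw [reentry_eq_self (visits_n hPi)]; exact ⟨rfl, by simp⟩, by simp⟩
  | cons e Q ih =>
    obtain ⟨rfl, hQ⟩ := hQ
    obtain ⟨p, hp, hsum⟩ := ih hQ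
    by_cases hu : G.Visits Pi (G.src e)
    · obtain ⟨f, hfs, hfd, hfv, hfw⟩ := exists_auxEdge_to_reentry w hu
      refine ⟨f :: p, ?_, ?_⟩
      · rw [reentry_eq_self hu]
        exact .cons hfs hfv (hfd ▸ hp)
      · simpa [List.filter_cons, hu, hfw] using hsum
    · have hn := visits_n hPi
      have hdn : G.Reaches (G.dst e) G.n := reaches_iff.2 ⟨Q, hQ⟩
      have hsd : G.Reaches (G.src e) (G.dst e) := reaches_iff.2 ⟨[e], rfl, rfl⟩
      obtain ⟨s, hs⟩ := exists_auxWalk_of_le hPi (reentry_spec hn (hsd.trans hdn)).1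
        (reentry_spec hn hdn).1 (reentry_le_reentry hn hsd hdn)
      refine ⟨s ++ p, hs.append hp, ?_⟩
      simp only [List.filter_cons, hu, decide_false, Bool.false_eq_true, if_false,
        List.map_append, List.sum_append]
      linarith [sum_auxWeight_nonneg hw s]

end DAGInst

theorem per_path_decomposition_general
    (G : DAGInst) (w : G.E → ℝ) (hw : ∀ e, 0 ≤ w e)
    (k : ℕ) (P : Fin k → List G.E) (hP : ∀ i, G.IsPath (P i))
    (i : Fin k) (Q : List G.E) (hQ : G.IsPath Q) :
    ∃ p : List (G.E ⊕ G.E), G.IsAuxPath (P i) p ∧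
      ((Q.filter fun e => decide (G.Visits (P i) (G.src e))).map w).sum ≤
        (p.map (G.auxWeight w)).sum := by
  have hPi := DAGInst.isPath_iff.1 (hP i)
  obtain ⟨p, hp, hsum⟩ := DAGInst.exists_auxWalk_from_reentry hw hPi (DAGInst.isPath_iff.1 hQ)
  rw [DAGInst.reentry_eq_self (Or.inl rfl)] at hp
  exact ⟨p, DAGInst.isAuxPath_iff.2 hp, hsum⟩

/-- **Per-path decomposition lemma** (used in the proof of Theorem 4.1): for every
`s,t`-path `Q` of `G`, the auxiliary graph `G_i` contains an `s,t`-path whose total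
weight is at least the total weight of the edges of `Q` that start in `V(P_i)`. -/
theorem per_path_decomposition
    (G : DAGInst) (w : G.E → ℝ) (hw : ∀ e, 0 ≤ w e)
    (k : ℕ) (P : Fin k → List G.E) (hP : ∀ i, G.IsPath (P i))
    (hcover : ∀ v ≤ G.n, ∃ i, G.Visits (P i) v)
    (i : Fin k) (Q : List G.E) (hQ : G.IsPath Q) :
    ∃ p : List (G.E ⊕ G.E), G.IsAuxPath (P i) p ∧
      ((Q.filter fun e => decide (G.Visits (P i) (G.src e))).map w).sum ≤
        (p.map (G.auxWeight w)).sum :=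
  per_path_decomposition_general G w hw k P hP i Q hQ
end

section
/- Lemma (cut probabilities of a random path, used in the proofs of Theorem 3.1 and Lemma 4.5). Let a DAG instance be given, let X be a random s,t-path (a measurable map from a probability space into the finite set of s,t-paths), and let 0 < i < n. Then Σ_{e ∈ E_{−i}} P(e ∈ X) = P(X does not visit node i), where E_{−i} = {e ∈ E : src(e) < i < dst(e)}. In particular, if the instance has width 1 with focal path P₀, then Σ_{e ∈ E_{−i}} P(e ∈ X) ≤ 1 − P(X = P₀). -/
open MeasureTheory ProbabilityTheory

/-!
Along an `s,t`-path the edges are ordered from left to right: `dst e ≤ src f` whenever `e` comes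
before `f`. Hence at most one edge of a path jumps over a node `i`, and none does if the path visits
`i`; conversely a path that misses an internal node must jump over it. So the events `{e ∈ X}`,
`e ∈ E₋ᵢ`, are disjoint with union `{X misses i}`, whose probability is
`1 - P(X visits i) ≤ 1 - P(X = P₀)` when `P₀` visits every node.
-/

theorem List.Pairwise.eq_or_rel_or_rel {α : Type*} {R : α → α → Prop} {l : List α}
    (h : l.Pairwise R) {x y : α} (hx : x ∈ l) (hy : y ∈ l) : x = y ∨ R x y ∨ R y x :=
  List.Pairwise.forall_of_forall_of_flip (R := fun x y => x = y ∨ R x y ∨ R y x)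
    (fun _ _ => Or.inl rfl) (h.imp fun hr => Or.inr (Or.inl hr))
    (h.imp fun hr => Or.inr (Or.inr hr)) hx hy

namespace List.IsChain

variable {α : Type*} {src dst : α → ℕ} {p : List α}

theorem pairwise_dst_le_src (hsd : ∀ e, src e < dst e)
    (hp : p.IsChain fun e f => dst e = src f) : p.Pairwise fun e f => dst e ≤ src f :=
  @List.IsChain.pairwise _ _ _ ⟨fun hef hfg => (hef.trans (hsd _).le).trans hfg⟩
    (hp.imp fun _ _ h => h.le)

theorem exists_src_lt_le_dst (hp : p.IsChain fun e f => dst e = src f) {a b i : ℕ}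
    (ha : p.head?.map src = some a) (hb : p.getLast?.map dst = some b)
    (hai : a < i) (hib : i ≤ b) : ∃ e ∈ p, src e < i ∧ i ≤ dst e := by
  induction p generalizing a with
  | nil => simp at ha
  | cons f rest ih =>
    simp only [List.head?_cons, Option.map_some, Option.some.injEq] at ha
    by_cases hif : i ≤ dst f
    · exact ⟨f, List.mem_cons_self, ha ▸ hai, hif⟩
    cases rest with
    | nil => simp_all
    | cons g r =>
      obtain ⟨hfg, hr⟩ := List.isChain_cons_cons.mp hp
      obtain ⟨e, he, hei⟩ := ih hr (a := dst f) (by simp [hfg]) (by simpa using hb) (by omega)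
      exact ⟨e, List.mem_cons_of_mem _ he, hei⟩

end List.IsChain

namespace DAGInst

variable {G : DAGInst} {p : List G.E} {i : ℕ}

theorem IsPath.pairwise_dst_le_src (hp : G.IsPath p) :
    p.Pairwise fun e f => G.dst e ≤ G.src f :=
  hp.2.2.pairwise_dst_le_src G.src_lt_dst

theorem IsPath.not_visits_iff (hp : G.IsPath p) (hin : i ≤ G.n) :
    ¬ G.Visits p i ↔ ∃ e ∈ p, G.src e < i ∧ i < G.dst e := by
  constructor
  · intro hv
    have hi0 : 0 < i := Nat.pos_of_ne_zero fun h => hv (Or.inl h)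
    obtain ⟨e, he, hei, hie⟩ := hp.2.2.exists_src_lt_le_dst hp.1 hp.2.1 hi0 hin
    exact ⟨e, he, hei, hie.lt_of_ne fun h => hv (Or.inr ⟨e, he, h.symm⟩)⟩
  · rintro ⟨f, hf, hfi, hif⟩ (rfl | ⟨e, he, rfl⟩)
    · omega
    · have := G.src_lt_dst e
      rcases hp.pairwise_dst_le_src.eq_or_rel_or_rel he hf with rfl | h | h <;> omega

theorem IsPath.eq_of_src_lt_lt_dst (hp : G.IsPath p) {e f : G.E} (he : e ∈ p) (hf : f ∈ p)
    (hei : G.src e < i ∧ i < G.dst e) (hfi : G.src f < i ∧ i < G.dst f) : e = f := by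
  rcases hp.pairwise_dst_le_src.eq_or_rel_or_rel he hf with h | h | h
  · exact h
  all_goals omega

theorem sum_measure_mem_eq_measure_not_visits {Ω : Type} [MeasurableSpace Ω] (μ : Measure Ω)
    {X : Ω → List G.E} (hX : ∀ ω, G.IsPath (X ω))
    (hXmeas : ∀ e, MeasurableSet {ω | e ∈ X ω}) (hin : i ≤ G.n) :
    ∑ e ∈ Finset.univ.filter (fun e : G.E => G.src e < i ∧ i < G.dst e), μ {ω | e ∈ X ω} =
      μ {ω | ¬ G.Visits (X ω) i} := by
  have hdisj : (Finset.univ.filter fun e : G.E => G.src e < i ∧ i < G.dst e : Set G.E)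
      |>.PairwiseDisjoint fun e => {ω | e ∈ X ω} := by
    intro e he f hf hef
    simp only [Finset.coe_filter, Finset.mem_univ, true_and] at he hf
    exact Set.disjoint_left.mpr fun ω heω hfω => hef ((hX ω).eq_of_src_lt_lt_dst heω hfω he hf)
  rw [← measure_biUnion_finset hdisj fun e _ => hXmeas e]
  congr 1
  ext ω
  simp [(hX ω).not_visits_iff hin, and_comm]

end DAGInst

theorem cut_probabilities_general
    (G : DAGInst) {Ω : Type} [mΩ : MeasurableSpace Ω]
    (μ : Measure Ω) [IsProbabilityMeasure μ]
    (X : Ω → List G.E) (hXpath : ∀ ω, G.IsPath (X ω))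
    (hXmeas : @Measurable Ω (List G.E) mΩ ⊤ X)
    (i : ℕ) (hin : i < G.n) :
    (∑ e ∈ Finset.univ.filter (fun e : G.E => G.src e < i ∧ i < G.dst e),
        μ {ω | e ∈ X ω}) = μ {ω | ¬ G.Visits (X ω) i} ∧
      ∀ P₀ : List G.E, G.IsPath P₀ → (∀ v ≤ G.n, G.Visits P₀ v) →
        (∑ e ∈ Finset.univ.filter (fun e : G.E => G.src e < i ∧ i < G.dst e),
          μ {ω | e ∈ X ω}) ≤ 1 - μ {ω | X ω = P₀} := by
  have hmeas (s : Set (List G.E)) : MeasurableSet (X ⁻¹' s) := hXmeas trivial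
  have hsum := G.sum_measure_mem_eq_measure_not_visits μ hXpath (fun e => hmeas {p | e ∈ p})
    hin.le
  refine ⟨hsum, fun P₀ _ hP₀ => ?_⟩
  have hvisits : {ω | X ω = P₀} ⊆ {ω | G.Visits (X ω) i} := fun ω (hω : X ω = P₀) =>
    show G.Visits (X ω) i from hω ▸ hP₀ i hin.le
  rw [hsum, show {ω | ¬ G.Visits (X ω) i} = {ω | G.Visits (X ω) i}ᶜ from rfl,
    prob_compl_eq_one_sub (s := {ω | G.Visits (X ω) i}) (hmeas {p | G.Visits p i})]
  exact tsub_le_tsub_left (measure_mono hvisits) 1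

/-- **Cut probabilities of a random path**: the probabilities that a random `s,t`-path uses
the edges skipping an internal node `i` sum to the probability of not visiting `i`; in a
width-1 graph this sum is at most `1 - P(X = P₀)`. -/
theorem cut_probabilities
    (G : DAGInst) {Ω : Type} [mΩ : MeasurableSpace Ω]
    (μ : Measure Ω) [IsProbabilityMeasure μ]
    (X : Ω → List G.E) (hXpath : ∀ ω, G.IsPath (X ω))
    (hXmeas : @Measurable Ω (List G.E) mΩ ⊤ X)
    (i : ℕ) (hi0 : 0 < i) (hin : i < G.n) :
    (∑ e ∈ Finset.univ.filter (fun e : G.E => G.src e < i ∧ i < G.dst e),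
        μ {ω | e ∈ X ω}) = μ {ω | ¬ G.Visits (X ω) i} ∧
      ∀ P₀ : List G.E, G.IsPath P₀ → (∀ v ≤ G.n, G.Visits P₀ v) →
        (∑ e ∈ Finset.univ.filter (fun e : G.E => G.src e < i ∧ i < G.dst e),
          μ {ω | e ∈ X ω}) ≤ 1 - μ {ω | X ω = P₀} :=
  cut_probabilities_general G (mΩ := mΩ) μ X hXpath hXmeas i hin
end

section
/- Lemma (strand partition for disjoint covers, used in the proof of Theorem 4.4). Consider a DAG instance covered by s,t-paths P_1,…,P_k whose visited node sets pairwise intersect exactly in {0, n} and together contain all nodes, and such that every edge whose source is an internal node (different from 0 and n) of some P_i has its destination in the visited node set V(P_i) of the same P_i. For i = 1,…,k define E_i := {e ∈ E : src(e) ∈ V(P_i)∖{0,n}} ∪ {e ∈ E : src(e) = 0 and dst(e) ∈ V(P_i)∖{0,n}}, and additionally put every edge with src(e) = 0 and dst(e) = n into E_1. Then E_1,…,E_k are pairwise disjoint with union E, and every s,t-path has all of its edges contained in E_i for exactly one index i. -/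
open MeasureTheory ProbabilityTheory

/-- The strand `E_i` of a node-disjoint cover: edges leaving an internal node of `P i`,
edges from `s` to an internal node of `P i`, and (for `i = 0`) the direct `s,t`-edges. -/
def DAGInst.strand (G : DAGInst) {k : ℕ} (P : Fin k → List G.E) (i : Fin k) :
    Set G.E :=
  {e | (G.Visits (P i) (G.src e) ∧ G.src e ≠ 0 ∧ G.src e ≠ G.n) ∨
       (G.src e = 0 ∧ G.Visits (P i) (G.dst e) ∧ G.dst e ≠ 0 ∧ G.dst e ≠ G.n) ∨
       ((i : ℕ) = 0 ∧ G.src e = 0 ∧ G.dst e = G.n)}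

/-!
Each edge belongs to the strand of the cover path owning its first internal endpoint (its
source, or its destination if it leaves `s`); the direct `s,t`-edges form part of strand `0`.
Node-disjointness of the cover makes this owner unique, and since the internal nodes of each
`P i` have all their out-edges inside `V(P i)`, consecutive edges of a path have the same owner:
an `s,t`-path lies in the strand of its first edge.
-/

namespace DAGInst

variable (G : DAGInst)

theorem src_ne_n (e : G.E) : G.src e ≠ G.n :=
  (G.src_lt_dst e).trans_le (G.dst_le_n e) |>.ne

theorem dst_ne_zero (e : G.E) : G.dst e ≠ 0 :=
  Nat.ne_zero_of_lt (G.src_lt_dst e)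

variable {G} {k : ℕ} {P : Fin k → List G.E}

theorem eq_of_mem_strand_of_mem_strand
    (hdisj : ∀ i j, i ≠ j → ∀ v, G.Visits (P i) v → G.Visits (P j) v → v = 0 ∨ v = G.n)
    {i j : Fin k} {e : G.E} (hi : e ∈ G.strand P i) (hj : e ∈ G.strand P j) : i = j := by
  by_contra hij
  have hshared := hdisj i j hij
  rcases hi with hi | hi | hi <;> rcases hj with hj | hj | hj <;> grind [Fin.ext_iff]

theorem exists_mem_strand (hk : 1 ≤ k) (hcover : ∀ v ≤ G.n, ∃ i, G.Visits (P i) v)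
    (e : G.E) : ∃ i, e ∈ G.strand P i := by
  by_cases h0 : G.src e = 0
  · by_cases hn : G.dst e = G.n
    · exact ⟨⟨0, hk⟩, Or.inr (Or.inr ⟨rfl, h0, hn⟩)⟩
    · obtain ⟨i, hi⟩ := hcover (G.dst e) (G.dst_le_n e)
      exact ⟨i, Or.inr (Or.inl ⟨h0, hi, G.dst_ne_zero e, hn⟩)⟩
  · obtain ⟨i, hi⟩ := hcover (G.src e) ((G.src_lt_dst e).trans_le (G.dst_le_n e)).le
    exact ⟨i, Or.inl ⟨hi, h0, G.src_ne_n e⟩⟩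

theorem mem_strand_of_dst_eq_src {i : Fin k}
    (hclosed : ∀ e : G.E, G.Visits (P i) (G.src e) →
      G.src e ≠ 0 → G.src e ≠ G.n → G.Visits (P i) (G.dst e))
    {e f : G.E} (he : e ∈ G.strand P i) (hef : G.dst e = G.src f) : f ∈ G.strand P i := by
  have hdst : G.Visits (P i) (G.dst e) := by
    rcases he with ⟨hv, h0, hn⟩ | ⟨-, hv, -, -⟩ | ⟨-, -, hdn⟩
    · exact hclosed e hv h0 hn
    · exact hv
    · exact absurd (hef ▸ hdn) (G.src_ne_n f)
  exact Or.inl ⟨hef ▸ hdst, hef ▸ G.dst_ne_zero e, G.src_ne_n f⟩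

theorem exists_forall_mem_strand_of_isChain (hk : 1 ≤ k)
    (hcover : ∀ v ≤ G.n, ∃ i, G.Visits (P i) v)
    (hclosed : ∀ i, ∀ e : G.E, G.Visits (P i) (G.src e) →
      G.src e ≠ 0 → G.src e ≠ G.n → G.Visits (P i) (G.dst e))
    {p : List G.E} (hp : p.IsChain fun e f => G.dst e = G.src f) :
    ∃ i, ∀ e ∈ p, e ∈ G.strand P i := by
  cases p with
  | nil => exact ⟨⟨0, hk⟩, by simp⟩
  | cons a _ =>
    obtain ⟨i, hi⟩ := exists_mem_strand hk hcover a
    exact ⟨i, hp.induction _ _ (fun _ _ hef he => mem_strand_of_dst_eq_src (hclosed i) he hef)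
      fun _ => hi⟩

end DAGInst

theorem strand_partition_general
    (G : DAGInst) (k : ℕ) (hk : 1 ≤ k)
    (P : Fin k → List G.E)
    (hcover : ∀ v ≤ G.n, ∃ i, G.Visits (P i) v)
    (hdisj : ∀ i j, i ≠ j → ∀ v, G.Visits (P i) v → G.Visits (P j) v →
      v = 0 ∨ v = G.n)
    (hclosed : ∀ i, ∀ e : G.E, G.Visits (P i) (G.src e) →
      G.src e ≠ 0 → G.src e ≠ G.n → G.Visits (P i) (G.dst e)) :
    (∀ i j, i ≠ j → G.strand P i ∩ G.strand P j = ∅) ∧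
      (⋃ i, G.strand P i) = Set.univ ∧
      ∀ p : List G.E, G.IsPath p → ∃! i, ∀ e ∈ p, e ∈ G.strand P i := by
  refine ⟨fun i j hij => Set.eq_empty_of_forall_notMem fun e he =>
      hij (DAGInst.eq_of_mem_strand_of_mem_strand hdisj he.1 he.2),
    Set.iUnion_eq_univ_iff.mpr (DAGInst.exists_mem_strand hk hcover), fun p hp => ?_⟩
  obtain ⟨hhead, -, hchain⟩ := hp
  obtain ⟨a, hap⟩ := List.exists_mem_of_ne_nil p (by rintro rfl; simp at hhead)
  obtain ⟨i, hi⟩ := DAGInst.exists_forall_mem_strand_of_isChain hk hcover hclosed hchain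
  exact ⟨i, hi, fun j hj => DAGInst.eq_of_mem_strand_of_mem_strand hdisj (hj a hap) (hi a hap)⟩

/-- **Strand partition for disjoint covers** (used in the proof of Theorem 4.4). -/
theorem strand_partition
    (G : DAGInst) (k : ℕ) (hk : 1 ≤ k)
    (P : Fin k → List G.E) (hP : ∀ i, G.IsPath (P i))
    (hcover : ∀ v ≤ G.n, ∃ i, G.Visits (P i) v)
    (hdisj : ∀ i j, i ≠ j → ∀ v, G.Visits (P i) v → G.Visits (P j) v →
      v = 0 ∨ v = G.n)
    (hclosed : ∀ i, ∀ e : G.E, G.Visits (P i) (G.src e) →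
      G.src e ≠ 0 → G.src e ≠ G.n → G.Visits (P i) (G.dst e)) :
    (∀ i j, i ≠ j → G.strand P i ∩ G.strand P j = ∅) ∧
      (⋃ i, G.strand P i) = Set.univ ∧
      ∀ p : List G.E, G.IsPath p → ∃! i, ∀ e ∈ p, e ∈ G.strand P i :=
  strand_partition_general G k hk P hcover hdisj hclosed
end

section
/- Online upper bound in the 4/9-upper-bound instance (Example 3.5 of the paper). Let 0 < ε ≤ 2/3 and let B and C be independent random variables with P(B = 2) = P(B = 0) = 1/2 and P(C = 2/ε) = ε = 1 − P(C = 0). Let D, F, G, H be random variables with D taking values in {0,1,2} and F, G, H taking values in {0,1}, such that D is independent of (B, C) and the pair (D, G) is independent of C. Then the payoff R := 2·1_{D=0} + (1 + B·F)·1_{D=1} + (B·G + C·H·(1−G))·1_{D=2} satisfies E[R] ≤ 2. -/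
/-!
The payoff is dominated pointwise by `2 + 1{D = 1} (B - 1) + 1{D = 2, G = 0} (C - 2)`: the red
edge yields at most `1 + B`, leaving `a` along `a → t` at most `2`, and continuing to `b` at most
`C`. Since `D` is independent of `B` and `(D, G)` of `C`, while `E B = 1` and `E C = 2`, both
correction terms have mean zero.
-/

open MeasureTheory ProbabilityTheory

section TwoPoint

variable {Ω : Type*} [MeasurableSpace Ω] {μ : Measure Ω} {X : Ω → ℝ} {a b : ℝ}

lemma ae_eq_or_eq_of_measure_add_measure_eq_one [IsProbabilityMeasure μ] (hX : Measurable X)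
    (hab : a ≠ b) (h : μ {ω | X ω = a} + μ {ω | X ω = b} = 1) :
    ∀ᵐ ω ∂μ, X ω = a ∨ X ω = b := by
  have hb : MeasurableSet {ω | X ω = b} := hX (measurableSet_singleton b)
  have hdisj : Disjoint {ω | X ω = a} {ω | X ω = b} :=
    Set.disjoint_left.mpr fun ω ha hb ↦ hab (ha.symm.trans hb)
  rw [ae_iff_measure_eq, Set.ofPred_or, measure_union hdisj hb, h, measure_univ]
  exact ((hX (measurableSet_singleton a)).union hb).nullMeasurableSet

lemma ae_eq_indicator_const_of_ae_eq_or_eq_zero (h : ∀ᵐ ω ∂μ, X ω = a ∨ X ω = 0) :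
    X =ᵐ[μ] {ω | X ω = a}.indicator fun _ ↦ a := by
  filter_upwards [h] with ω hω
  rcases hω with hω | hω <;> simp [Set.indicator_apply, hω]

lemma integrable_of_ae_eq_or_eq_zero [IsFiniteMeasure μ] (hX : Measurable X)
    (h : ∀ᵐ ω ∂μ, X ω = a ∨ X ω = 0) : Integrable X μ :=
  ((integrable_const a).indicator (hX (measurableSet_singleton a))).congr
    (ae_eq_indicator_const_of_ae_eq_or_eq_zero h).symm

lemma integral_of_ae_eq_or_eq_zero (hX : Measurable X) (h : ∀ᵐ ω ∂μ, X ω = a ∨ X ω = 0) :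
    ∫ ω, X ω ∂μ = μ.real {ω | X ω = a} * a := by
  have ha : MeasurableSet {ω | X ω = a} := hX (measurableSet_singleton a)
  rw [integral_congr_ae (ae_eq_indicator_const_of_ae_eq_or_eq_zero h),
    integral_indicator_const a ha, smul_eq_mul]

end TwoPoint

lemma ProbabilityTheory.IndepFun.integral_indicator_preimage_sub_integral
    {Ω β : Type*} [MeasurableSpace Ω] [MeasurableSpace β] {μ : Measure Ω} [IsProbabilityMeasure μ]
    {Y : Ω → β} {X : Ω → ℝ} (h : IndepFun Y X μ) (hY : Measurable Y) (hX : Integrable X μ)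
    {s : Set β} (hs : MeasurableSet s) :
    ∫ ω, (Y ⁻¹' s).indicator (fun ω ↦ X ω - ∫ x, X x ∂μ) ω ∂μ = 0 := by
  set m := ∫ x, X x ∂μ
  set ι : β → ℝ := s.indicator fun _ ↦ 1
  have hι : Measurable ι := measurable_const.indicator hs
  have hfactor : (Y ⁻¹' s).indicator (fun ω ↦ X ω - m) = fun ω ↦ ι (Y ω) * (X ω - m) := by
    ext ω
    by_cases hω : Y ω ∈ s <;> simp [ι, hω]
  have hind : IndepFun (fun ω ↦ ι (Y ω)) (fun ω ↦ X ω - m) μ :=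
    h.comp hι (measurable_id.sub_const m)
  have hcentered : ∫ ω, (X ω - m) ∂μ = 0 := by
    rw [integral_sub hX (integrable_const m), integral_const, probReal_univ, one_smul, sub_self]
  rw [hfactor, hind.integral_fun_mul_eq_mul_integral (hι.comp hY).aestronglyMeasurable
    (hX.sub (integrable_const m)).aestronglyMeasurable, hcentered, mul_zero]

def onlinePayoff (d : ℕ) (b c f g h : ℝ) : ℝ :=
  (if d = 0 then 2 else 0) + (if d = 1 then 1 + b * f else 0) +
    (if d = 2 then b * g + c * h * (1 - g) else 0)

section Payoff

variable {d : ℕ} {b c f g h : ℝ}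

lemma onlinePayoff_nonneg (hb : 0 ≤ b) (hc : 0 ≤ c) (hf : f = 0 ∨ f = 1) (hg : g = 0 ∨ g = 1)
    (hh : h = 0 ∨ h = 1) : 0 ≤ onlinePayoff d b c f g h := by
  unfold onlinePayoff
  rcases hf with rfl | rfl <;> rcases hg with rfl | rfl <;> rcases hh with rfl | rfl <;>
    split_ifs <;> norm_num <;> positivity

lemma onlinePayoff_le (hb0 : 0 ≤ b) (hb2 : b ≤ 2) (hc : 0 ≤ c) (hf : f = 0 ∨ f = 1)
    (hg : g = 0 ∨ g = 1) (hh : h = 0 ∨ h = 1) :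
    onlinePayoff d b c f g h ≤
      2 + (if d = 1 then b - 1 else 0) + (if (d, g) = (2, 0) then c - 2 else 0) := by
  unfold onlinePayoff
  rcases hf with rfl | rfl <;> rcases hg with rfl | rfl <;> rcases hh with rfl | rfl <;>
    split_ifs <;> simp_all <;> linarith

end Payoff

theorem integral_onlinePayoff_le_two {Ω : Type*} [MeasurableSpace Ω] {μ : Measure Ω}
    [IsProbabilityMeasure μ] {B C F G H : Ω → ℝ} {D : Ω → ℕ}
    (hB : ∀ᵐ ω ∂μ, 0 ≤ B ω ∧ B ω ≤ 2) (hC : ∀ᵐ ω ∂μ, 0 ≤ C ω)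
    (hB_int : Integrable B μ) (hC_int : Integrable C μ)
    (hEB : ∫ ω, B ω ∂μ = 1) (hEC : ∫ ω, C ω ∂μ = 2)
    (hDmeas : Measurable D) (hGmeas : Measurable G)
    (hF : ∀ ω, F ω = 0 ∨ F ω = 1) (hG : ∀ ω, G ω = 0 ∨ G ω = 1) (hH : ∀ ω, H ω = 0 ∨ H ω = 1)
    (hDB : IndepFun D B μ) (hDGC : IndepFun (fun ω ↦ (D ω, G ω)) C μ) :
    ∫ ω, onlinePayoff (D ω) (B ω) (C ω) (F ω) (G ω) (H ω) ∂μ ≤ 2 := by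
  have hDG : Measurable fun ω ↦ (D ω, G ω) := hDmeas.prodMk hGmeas
  set ιB := (D ⁻¹' {1}).indicator fun ω ↦ B ω - ∫ x, B x ∂μ
  set ιC := ((fun ω ↦ (D ω, G ω)) ⁻¹' {(2, 0)}).indicator fun ω ↦ C ω - ∫ x, C x ∂μ
  have hιB_int : Integrable ιB μ :=
    (hB_int.sub (integrable_const _)).indicator (hDmeas (measurableSet_singleton 1))
  have hιC_int : Integrable ιC μ :=
    (hC_int.sub (integrable_const _)).indicator (hDG (measurableSet_singleton _))
  have h2B_int : Integrable (fun ω ↦ 2 + ιB ω) μ := (integrable_const 2).add hιB_int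
  have hιB : ∫ ω, ιB ω ∂μ = 0 :=
    hDB.integral_indicator_preimage_sub_integral hDmeas hB_int (measurableSet_singleton 1)
  have hιC : ∫ ω, ιC ω ∂μ = 0 :=
    hDGC.integral_indicator_preimage_sub_integral hDG hC_int (measurableSet_singleton _)
  calc _ ≤ ∫ ω, 2 + ιB ω + ιC ω ∂μ := by
        refine integral_mono_of_nonneg ?_ (h2B_int.add hιC_int) ?_ <;>
          filter_upwards [hB, hC] with ω ⟨hb0, hb2⟩ hc
        · exact onlinePayoff_nonneg hb0 hc (hF ω) (hG ω) (hH ω)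
        · classical
          simpa only [ιB, ιC, Set.indicator_apply, Set.mem_preimage, Set.mem_singleton_iff, hEB,
            hEC] using onlinePayoff_le hb0 hb2 hc (hF ω) (hG ω) (hH ω)
    _ = 2 := by
        rw [integral_add h2B_int hιC_int, integral_add (integrable_const 2) hιB_int, hιB, hιC]
        simp

theorem example_49_online_value_general
    {Ω : Type} [MeasurableSpace Ω] (μ : Measure Ω) [IsProbabilityMeasure μ]
    (ε : ℝ) (hε0 : 0 < ε) (hε1 : ε ≤ 2 / 3)
    (B C : Ω → ℝ) (hBmeas : Measurable B) (hCmeas : Measurable C)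
    (hB2 : μ {ω | B ω = 2} = 1 / 2) (hB0 : μ {ω | B ω = 0} = 1 / 2)
    (hC : μ {ω | C ω = 2 / ε} = ENNReal.ofReal ε)
    (hC0 : μ {ω | C ω = 0} = ENNReal.ofReal (1 - ε))
    (D : Ω → ℕ) (F G H : Ω → ℝ)
    (hDmeas : Measurable D)
    (hGmeas : Measurable G)
    (hFrange : ∀ ω, F ω = 0 ∨ F ω = 1)
    (hGrange : ∀ ω, G ω = 0 ∨ G ω = 1)
    (hHrange : ∀ ω, H ω = 0 ∨ H ω = 1)
    (hDindep : IndepFun D (fun ω => (B ω, C ω)) μ)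
    (hDGindep : IndepFun (fun ω => (D ω, G ω)) C μ) :
    (∫ ω, ((if D ω = 0 then (2 : ℝ) else 0) +
      (if D ω = 1 then 1 + B ω * F ω else 0) +
      (if D ω = 2 then B ω * G ω + C ω * H ω * (1 - G ω) else 0)) ∂μ) ≤ 2 := by
  have hBae : ∀ᵐ ω ∂μ, B ω = 2 ∨ B ω = 0 :=
    ae_eq_or_eq_of_measure_add_measure_eq_one hBmeas two_ne_zero
      (by rw [hB2, hB0, ENNReal.add_halves])
  have hCae : ∀ᵐ ω ∂μ, C ω = 2 / ε ∨ C ω = 0 :=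
    ae_eq_or_eq_of_measure_add_measure_eq_one hCmeas (by positivity) (by
      rw [hC, hC0, ← ENNReal.ofReal_add hε0.le (by linarith), add_sub_cancel, ENNReal.ofReal_one])
  have hEB : ∫ ω, B ω ∂μ = 1 := by
    rw [integral_of_ae_eq_or_eq_zero hBmeas hBae, measureReal_def, hB2]
    norm_num
  have hEC : ∫ ω, C ω ∂μ = 2 := by
    rw [integral_of_ae_eq_or_eq_zero hCmeas hCae, measureReal_def, hC,
      ENNReal.toReal_ofReal hε0.le]
    field_simp
  refine integral_onlinePayoff_le_two ?_ ?_ (integrable_of_ae_eq_or_eq_zero hBmeas hBae)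
    (integrable_of_ae_eq_or_eq_zero hCmeas hCae) hEB hEC hDmeas hGmeas hFrange hGrange hHrange
    (hDindep.comp measurable_id measurable_fst) hDGindep
  · filter_upwards [hBae] with ω hω
    rcases hω with hω | hω <;> norm_num [hω]
  · filter_upwards [hCae] with ω hω
    rcases hω with hω | hω <;> simp only [hω, le_refl, div_nonneg zero_le_two hε0.le]

/-- **Example 3.5, online upper bound**: every online strategy in the 4/9-instance,
encoded by decisions `D ∈ {0,1,2}` (independent of `(B, C)`), `F, G, H ∈ {0,1}` with
`(D, G)` independent of `C`, has expected payoff at most `2`. -/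
theorem example_49_online_value
    {Ω : Type} [MeasurableSpace Ω] (μ : Measure Ω) [IsProbabilityMeasure μ]
    (ε : ℝ) (hε0 : 0 < ε) (hε1 : ε ≤ 2 / 3)
    (B C : Ω → ℝ) (hBmeas : Measurable B) (hCmeas : Measurable C)
    (hBC : IndepFun B C μ)
    (hB2 : μ {ω | B ω = 2} = 1 / 2) (hB0 : μ {ω | B ω = 0} = 1 / 2)
    (hC : μ {ω | C ω = 2 / ε} = ENNReal.ofReal ε)
    (hC0 : μ {ω | C ω = 0} = ENNReal.ofReal (1 - ε))
    (D : Ω → ℕ) (F G H : Ω → ℝ)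
    (hDmeas : Measurable D) (hFmeas : Measurable F)
    (hGmeas : Measurable G) (hHmeas : Measurable H)
    (hDrange : ∀ ω, D ω ≤ 2)
    (hFrange : ∀ ω, F ω = 0 ∨ F ω = 1)
    (hGrange : ∀ ω, G ω = 0 ∨ G ω = 1)
    (hHrange : ∀ ω, H ω = 0 ∨ H ω = 1)
    (hDindep : IndepFun D (fun ω => (B ω, C ω)) μ)
    (hDGindep : IndepFun (fun ω => (D ω, G ω)) C μ) :
    (∫ ω, ((if D ω = 0 then (2 : ℝ) else 0) +
      (if D ω = 1 then 1 + B ω * F ω else 0) +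
      (if D ω = 2 then B ω * G ω + C ω * H ω * (1 - G ω) else 0)) ∂μ) ≤ 2 :=
  example_49_online_value_general μ ε hε0 hε1 B C hBmeas hCmeas hB2 hB0 hC hC0 D F G H hDmeas hGmeas
    hFrange hGrange hHrange hDindep hDGindep
end
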